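/- Under the stated tank setup, the augmented storage function W(t) = H(t) + T(t), where H(t) = ½ ẋ(t)ᵀ M_d(t) ẋ(t) and T(t) = ½ z(t)², satisfies for every time t the identity Ẇ(t) = ẋ(t)ᵀ F_ext(t) − (1 − φ(t)) P_D(t) + (1 − γ(t)) P_M(t). -/

import Mathlib

/-!
Since `M_d` is symmetric, `Ḣ = ẋᵀ M_d ẍ + P_M`. The tank dynamics are chosen so that
`Ṫ = z ż = φ P_D − γ P_M`. Adding the two and substituting `ẋᵀ F_ext = ẋᵀ M_d ẍ + P_D` gives
the identity.
-/

open Matrix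

section Calculus

variable {𝕜 : Type*} [NontriviallyNormedField 𝕜] {ι m : Type*} [Fintype ι]
  {t : 𝕜} {u w : 𝕜 → ι → 𝕜} {u' w' : ι → 𝕜}

theorem HasDerivAt.dotProduct (hu : HasDerivAt u u' t) (hw : HasDerivAt w w' t) :
    HasDerivAt (fun s => u s ⬝ᵥ w s) (u' ⬝ᵥ w t + u t ⬝ᵥ w') t :=
  (HasDerivAt.fun_sum (u := Finset.univ) fun i _ =>
    (hasDerivAt_pi.mp hu i).fun_mul (hasDerivAt_pi.mp hw i)).congr_deriv Finset.sum_add_distrib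

theorem HasDerivAt.mulVec {M : 𝕜 → Matrix m ι 𝕜} {M' : Matrix m ι 𝕜}
    (hM : ∀ i j, HasDerivAt (fun s => M s i j) (M' i j) t) (hw : HasDerivAt w w' t) :
    HasDerivAt (fun s => M s *ᵥ w s) (M' *ᵥ w t + M t *ᵥ w') t :=
  hasDerivAt_pi.mpr fun i => (hasDerivAt_pi.mpr (hM i)).dotProduct hw

theorem Matrix.IsSymm.dotProduct_mulVec_comm {A : Matrix ι ι 𝕜} (hA : A.IsSymm) (u w : ι → 𝕜) :
    u ⬝ᵥ (A *ᵥ w) = w ⬝ᵥ (A *ᵥ u) := by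
  rw [dotProduct_mulVec, dotProduct_comm, ← mulVec_transpose, hA.eq]

theorem HasDerivAt.dotProduct_mulVec_self {M : 𝕜 → Matrix ι ι 𝕜} {M' : Matrix ι ι 𝕜}
    (hM : ∀ i j, HasDerivAt (fun s => M s i j) (M' i j) t) (hsymm : (M t).IsSymm)
    (hw : HasDerivAt w w' t) :
    HasDerivAt (fun s => w s ⬝ᵥ (M s *ᵥ w s)) (2 * (w t ⬝ᵥ (M t *ᵥ w')) + w t ⬝ᵥ (M' *ᵥ w t)) t := by
  refine (hw.dotProduct (hw.mulVec hM)).congr_deriv ?_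
  rw [hsymm.dotProduct_mulVec_comm w', dotProduct_add]
  ring

theorem HasDerivAt.half_mul_sq_of_div [CharZero 𝕜] {z : 𝕜 → 𝕜} {p : 𝕜}
    (hz : HasDerivAt z (p / z t) t) (hz0 : z t ≠ 0) :
    HasDerivAt (fun s => 1 / 2 * z s ^ 2) p t := by
  refine ((hz.fun_pow 2).const_mul (1 / 2 : 𝕜)).congr_deriv ?_
  field_simp
  push_cast
  ring

end Calculus

theorem augmented_storage_rate_general {n : ℕ}
    (x : ℝ → Fin n → ℝ) (hx : ContDiff ℝ 2 x)
    (Md Dd Md' : ℝ → Matrix (Fin n) (Fin n) ℝ)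
    (hMd' : ∀ i j t, HasDerivAt (fun s => Md s i j) (Md' t i j) t)
    (hMdpd : ∀ t, (Md t).PosDef)
    (Fext : ℝ → Fin n → ℝ)
    (hFext : ∀ t, Fext t = Md t *ᵥ deriv (deriv x) t + Dd t *ᵥ deriv x t)
    (PD PM : ℝ → ℝ)
    (hPD : ∀ t, PD t = deriv x t ⬝ᵥ (Dd t *ᵥ deriv x t))
    (hPM : ∀ t, PM t = (1 / 2) * (deriv x t ⬝ᵥ (Md' t *ᵥ deriv x t)))
    (φ γ : ℝ → ℝ)
    (z : ℝ → ℝ) (hz : ∀ t, z t ≠ 0)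
    (hzdyn : ∀ t, HasDerivAt z (φ t / z t * PD t - γ t / z t * PM t) t)
    (T H W : ℝ → ℝ)
    (hT : ∀ t, T t = (1 / 2) * z t ^ 2)
    (hH : ∀ t, H t = (1 / 2) * (deriv x t ⬝ᵥ (Md t *ᵥ deriv x t)))
    (hW : ∀ t, W t = H t + T t) :
    ∀ t, HasDerivAt W
      (deriv x t ⬝ᵥ Fext t - (1 - φ t) * PD t + (1 - γ t) * PM t) t := by
  intro t
  have hv : HasDerivAt (deriv x) (deriv (deriv x) t) t :=
    (hx.differentiable_deriv_two t).hasDerivAt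
  have hH' : HasDerivAt H (deriv x t ⬝ᵥ (Md t *ᵥ deriv (deriv x) t) + PM t) t := by
    rw [funext hH, hPM]
    refine ((hv.dotProduct_mulVec_self (hMd' · · t)
      (isHermitian_iff_isSymm.mp (hMdpd t).isHermitian)).const_mul (1 / 2 : ℝ)).congr_deriv ?_
    ring
  have hT' : HasDerivAt T (φ t * PD t - γ t * PM t) t := by
    rw [funext hT]
    exact HasDerivAt.half_mul_sq_of_div ((hzdyn t).congr_deriv (by ring)) (hz t)
  rw [funext hW]
  refine (hH'.add hT').congr_deriv ?_
  rw [hFext, hPD, dotProduct_add]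
  ring

/-- Under the tank setup, the augmented storage function `W = H + T`
satisfies `Ẇ(t) = ẋ(t)ᵀ F_ext(t) − (1 − φ(t)) P_D(t) + (1 − γ(t)) P_M(t)` for every `t`. -/
theorem augmented_storage_rate {n : ℕ} (hn : 0 < n)
    (x : ℝ → Fin n → ℝ) (hx : ContDiff ℝ 2 x)
    (Md Dd Md' Dd' : ℝ → Matrix (Fin n) (Fin n) ℝ)
    (hMd' : ∀ i j t, HasDerivAt (fun s => Md s i j) (Md' t i j) t)
    (hDd' : ∀ i j t, HasDerivAt (fun s => Dd s i j) (Dd' t i j) t)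
    (hMdpd : ∀ t, (Md t).PosDef) (hDdpd : ∀ t, (Dd t).PosDef)
    (Fext : ℝ → Fin n → ℝ)
    (hFext : ∀ t, Fext t = Md t *ᵥ deriv (deriv x) t + Dd t *ᵥ deriv x t)
    (PD PM : ℝ → ℝ)
    (hPD : ∀ t, PD t = deriv x t ⬝ᵥ (Dd t *ᵥ deriv x t))
    (hPM : ∀ t, PM t = (1 / 2) * (deriv x t ⬝ᵥ (Md' t *ᵥ deriv x t)))
    (φ γ : ℝ → ℝ)
    (hφ : ∀ t, φ t = 0 ∨ φ t = 1) (hγ : ∀ t, γ t = 0 ∨ γ t = 1)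
    (z : ℝ → ℝ) (hz : ∀ t, z t ≠ 0)
    (hzdyn : ∀ t, HasDerivAt z (φ t / z t * PD t - γ t / z t * PM t) t)
    (T H W : ℝ → ℝ)
    (hT : ∀ t, T t = (1 / 2) * z t ^ 2)
    (hH : ∀ t, H t = (1 / 2) * (deriv x t ⬝ᵥ (Md t *ᵥ deriv x t)))
    (hW : ∀ t, W t = H t + T t) :
    ∀ t, HasDerivAt W
      (deriv x t ⬝ᵥ Fext t - (1 - φ t) * PD t + (1 - γ t) * PM t) t :=
  augmented_storage_rate_general x hx Md Dd Md' hMd' hMdpd Fext hFext PD PM hPD hPM φ γ z hz hzdyn T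
    H W hT hH hW
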